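/- For every integer j ≥ 1, the 2j-th derivative of h(x) = 2/(1 + e^{x/2}) vanishes at the origin: h^{(2j)}(0) = 0. -/

import Mathlib

/-- The function `h(x) = 2/(1 + e^{x/2})`. -/
noncomputable def h (x : ℝ) : ℝ := 2 / (1 + Real.exp (x / 2))

lemma g_odd (x : ℝ) : h (-x) - 1 = -(h x - 1) := by
  have h1 : (0:ℝ) < Real.exp (x / 2) := Real.exp_pos _
  have h2 : (0:ℝ) < Real.exp (-x / 2) := Real.exp_pos _
  have he : Real.exp (-x / 2) = 1 / Real.exp (x / 2) := by
    rw [neg_div, Real.exp_neg, one_div]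
  unfold h
  rw [he]
  field_simp
  ring

/-- For every `j ≥ 1`, the `2j`-th derivative of `h` vanishes at the origin. -/
theorem even_deriv_h_zero (j : ℕ) (hj : 1 ≤ j) : iteratedDeriv (2 * j) h 0 = 0 := by
  set g : ℝ → ℝ := fun x => h x - 1 with hg
  have key : iteratedDeriv (2 * j) g 0 = 0 := by
    have h1 : iteratedDeriv (2 * j) (fun x => g (-x)) 0
        = (-1 : ℝ) ^ (2 * j) • iteratedDeriv (2 * j) g (-0) := iteratedDeriv_comp_neg _ _ _
    have h2 : (fun x => g (-x)) = fun x => -(g x) := by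
      funext x; exact g_odd x
    rw [h2, iteratedDeriv_fun_neg] at h1
    simp only [neg_zero, Even.neg_one_pow (even_two_mul j), one_smul] at h1
    linarith
  obtain ⟨k, hk⟩ : ∃ k, 2 * j = k + 1 := ⟨2 * j - 1, by omega⟩
  rw [hk] at key ⊢
  rw [iteratedDeriv_succ'] at key ⊢
  have : deriv h = deriv g := by
    funext x
    rw [hg]
    simp [deriv_sub_const]
  rw [this]; exact key
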